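/- arXiv:1012.5512 — 3 statements merged into one kernel-verified Lean document; each statement's English description precedes it below -/
import Mathlib

section
/- Let K be a compact subset of the cube [0,1]^Γ and let σ : Γ → P be a map such that the quasi metric f(x,y) = sup_{γ∈Γ} h^{σ(γ)}(|x_γ − y_γ|) fragments K, and suppose that σ(Γ) is a σ-bounded subset of (ℕ^ℕ, ≤). Then K is Radon-Nikodým compact (there exists a lower semicontinuous metric on K fragmenting K), and moreover there exist sets Γ_n ⊆ Γ (n ∈ ℕ) with Γ = ⋃_{n∈ℕ} Γ_n such that each pseudometric d_{Γ_n} fragments K. -/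
open Set Topology Cardinal

/-- A map `f : X × X → ℝ` fragments the topological space `X` if for every nonempty
subset `L` of `X` and every `ε > 0` there is a nonempty relatively open subset of `L`
of `f`-diameter less than `ε`. -/
def Fragments {X : Type*} [TopologicalSpace X] (f : X → X → ℝ) : Prop :=
  ∀ L : Set X, L.Nonempty → ∀ ε : ℝ, 0 < ε →
    ∃ V : Set X, IsOpen V ∧ (V ∩ L).Nonempty ∧
      ∀ x ∈ V ∩ L, ∀ y ∈ V ∩ L, f x y < ε

/-- `f` (defined on the ambient space `X`) fragments the subset `K`. -/
def FragmentsOn {X : Type*} [TopologicalSpace X] (f : X → X → ℝ) (K : Set X) : Prop :=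
  ∀ L : Set X, L ⊆ K → L.Nonempty → ∀ ε : ℝ, 0 < ε →
    ∃ V : Set X, IsOpen V ∧ (V ∩ L).Nonempty ∧
      ∀ x ∈ V ∩ L, ∀ y ∈ V ∩ L, f x y < ε

/-- A quasi metric: nonnegative, symmetric, and vanishing exactly on the diagonal. -/
def IsQuasiMetric {X : Type*} (f : X → X → ℝ) : Prop :=
  (∀ x y, 0 ≤ f x y) ∧ (∀ x y, f x y = f y x) ∧ (∀ x y, f x y = 0 ↔ x = y)

/-- A metric (as a two-variable real function): symmetric, vanishing exactly on the
diagonal, and satisfying the triangle inequality. -/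
def IsMetricFun {X : Type*} (d : X → X → ℝ) : Prop :=
  (∀ x y, d x y = d y x) ∧ (∀ x y, d x y = 0 ↔ x = y) ∧
    (∀ x y z, d x z ≤ d x y + d y z)

/-- Lower semicontinuity of a two-variable map for the product topology. -/
def LSC {X : Type*} [TopologicalSpace X] (f : X → X → ℝ) : Prop :=
  LowerSemicontinuous (fun p : X × X => f p.1 p.2)

/-- A subset of `ℕ → ℕ` is σ-bounded (for the pointwise order) if it is a countable
union of order-bounded sets. -/
def SigmaBounded (S : Set (ℕ → ℕ)) : Prop :=
  ∃ B : ℕ → Set (ℕ → ℕ), S ⊆ (⋃ n, B n) ∧ ∀ n, ∃ τ : ℕ → ℕ, ∀ σ ∈ B n, σ ≤ τ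

/-- The cardinal `𝔟`: the least cardinality of a subset of `ℕ → ℕ` which is not
σ-bounded for the pointwise order. -/
noncomputable def cardinalB : Cardinal :=
  sInf { c | ∃ S : Set (ℕ → ℕ), ¬ SigmaBounded S ∧ #S = c }

/-- `P`: the set of strictly increasing sequences of positive integers. -/
def Pset : Set (ℕ → ℕ) := {σ | StrictMono σ ∧ ∀ n, 0 < σ n}

/-- The function `h^σ : [0,∞) → ℝ`: `h^σ(0) = 0`, `h^σ(t) = 1/σ_n` whenever
`1/(n+1) < t ≤ 1/n` (so that `n = ⌊1/t⌋`), and `h^σ(t) = 1/σ_1` for `t > 1`. -/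
noncomputable def hFun (σ : ℕ → ℕ) (t : ℝ) : ℝ :=
  if t ≤ 0 then 0
  else if 1 < t then ((σ 1 : ℝ))⁻¹
  else ((σ (Nat.floor (1 / t)) : ℝ))⁻¹

/-- The pseudometric `d_A` on `[0,1]^Γ` given by `d_A(x,y) = sup_{γ ∈ A} |x_γ - y_γ|`. -/
noncomputable def dGamma {Γ : Type*} (A : Set Γ) (x y : Γ → ℝ) : ℝ :=
  ⨆ γ : A, |x γ - y γ|

/-! Cover `σ(Γ)` by countably many sets `B_n`, each bounded by some `τ_n`, and put
`Γ_n = σ⁻¹(B_n)`. For `γ ∈ Γ_n` and `t > 1/N` we have `h^{σ(γ)}(t) ≥ 1/σ(γ)_N > 1/(τ_n(N) + 1)`,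
so a set of small `f`-diameter has `d_{Γ_n}`-diameter at most `1/N`: each `d_{Γ_n}` fragments `K`.
These pseudometrics are lower semicontinuous, bounded by `1` on the cube and separate the points of
`K`, so `D = sup_n 2⁻ⁿ d_{Γ_n}` is a lower semicontinuous metric on `K`. It fragments `K`: the
finitely many `d_{Γ_k}`, `k ≤ N`, are made small by shrinking the relatively open set `N + 1`
times, and the tail `sup_{n > N} 2⁻ⁿ d_{Γ_n}` is at most `2⁻ᴺ`. -/

section Fragmentation

variable {X : Type*} [TopologicalSpace X]

theorem FragmentsOn.of_forall_lt {f g : X → X → ℝ} {K : Set X} (hf : FragmentsOn f K)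
    (hfg : ∀ ε > 0, ∃ δ > 0, ∀ x ∈ K, ∀ y ∈ K, f x y < δ → g x y < ε) :
    FragmentsOn g K := by
  intro L hLK hL ε hε
  obtain ⟨δ, hδ, hδε⟩ := hfg ε hε
  obtain ⟨V, hV, hVL, hdiam⟩ := hf L hLK hL δ hδ
  exact ⟨V, hV, hVL, fun x hx y hy => hδε x (hLK hx.2) y (hLK hy.2) (hdiam x hx y hy)⟩

theorem FragmentsOn.fragments_subtype {f : X → X → ℝ} {K : Set X} (hf : FragmentsOn f K) :
    Fragments fun x y : K => f x y := by
  intro L hL ε hε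
  obtain ⟨V, hV, ⟨_, hzV, z, hzL, rfl⟩, hdiam⟩ :=
    hf (Subtype.val '' L) (by rintro _ ⟨z, -, rfl⟩; exact z.2) (hL.image _) ε hε
  exact ⟨Subtype.val ⁻¹' V, hV.preimage continuous_subtype_val, ⟨z, hzV, hzL⟩,
    fun x hx y hy => hdiam x ⟨hx.1, x, hx.2, rfl⟩ y ⟨hy.1, y, hy.2, rfl⟩⟩

theorem Fragments.exists_forall_le_lt {d : ℕ → X → X → ℝ} (hd : ∀ n, Fragments (d n)) (M : ℕ)
    {L : Set X} (hL : L.Nonempty) {ε : ℝ} (hε : 0 < ε) :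
    ∃ V, IsOpen V ∧ (V ∩ L).Nonempty ∧ ∀ x ∈ V ∩ L, ∀ y ∈ V ∩ L, ∀ k ≤ M, d k x y < ε := by
  induction M generalizing L with
  | zero =>
    obtain ⟨V, hV, hVL, hdiam⟩ := hd 0 L hL ε hε
    exact ⟨V, hV, hVL, fun x hx y hy k hk => Nat.le_zero.1 hk ▸ hdiam x hx y hy⟩
  | succ M ih =>
    obtain ⟨V, hV, hVL, hdiamV⟩ := ih hL
    obtain ⟨W, hW, ⟨z, hzW, hzV, hzL⟩, hdiamW⟩ := hd (M + 1) (V ∩ L) hVL ε hε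
    refine ⟨V ∩ W, hV.inter hW, ⟨z, ⟨hzV, hzW⟩, hzL⟩, fun x hx y hy k hk => ?_⟩
    rcases Nat.le_succ_iff.1 hk with hk | rfl
    · exact hdiamV x ⟨hx.1.1, hx.2⟩ y ⟨hy.1.1, hy.2⟩ k hk
    · exact hdiamW x ⟨hx.1.2, hx.1.1, hx.2⟩ y ⟨hy.1.2, hy.1.1, hy.2⟩

end Fragmentation

section WeightedSup

variable {X : Type*}

noncomputable def weightedSup (d : ℕ → X → X → ℝ) (x y : X) : ℝ :=
  ⨆ n, (2⁻¹ : ℝ) ^ n * d n x y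

variable {d : ℕ → X → X → ℝ}

theorem weighted_term_nonneg (h0 : ∀ n x y, 0 ≤ d n x y) (n : ℕ) (x y : X) :
    0 ≤ (2⁻¹ : ℝ) ^ n * d n x y :=
  mul_nonneg (by positivity) (h0 n x y)

theorem weighted_term_le_pow (h1 : ∀ n x y, d n x y ≤ 1) (n : ℕ) (x y : X) : (2⁻¹ : ℝ) ^ n * d n x y ≤ (2⁻¹ : ℝ) ^ n :=
  mul_le_of_le_one_right (by positivity) (h1 n x y)

theorem weighted_term_le_self (h0 : ∀ n x y, 0 ≤ d n x y) (n : ℕ) (x y : X) :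
    (2⁻¹ : ℝ) ^ n * d n x y ≤ d n x y :=
  mul_le_of_le_one_left (h0 n x y) (pow_le_one₀ (by norm_num) (by norm_num))

theorem bddAbove_range_weighted_term (h1 : ∀ n x y, d n x y ≤ 1) (x y : X) : BddAbove (range fun n => (2⁻¹ : ℝ) ^ n * d n x y) :=
  ⟨1, forall_mem_range.2 fun n =>
    (weighted_term_le_pow h1 n x y).trans (pow_le_one₀ (by norm_num) (by norm_num))⟩

theorem le_weightedSup (h1 : ∀ n x y, d n x y ≤ 1) (n : ℕ) (x y : X) :
    (2⁻¹ : ℝ) ^ n * d n x y ≤ weightedSup d x y :=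
  le_ciSup (bddAbove_range_weighted_term h1 x y) n

theorem isMetricFun_weightedSup (h0 : ∀ n x y, 0 ≤ d n x y) (h1 : ∀ n x y, d n x y ≤ 1)
    (hcomm : ∀ n x y, d n x y = d n y x) (hself : ∀ n x, d n x x = 0)
    (htri : ∀ n x y z, d n x z ≤ d n x y + d n y z) (hsep : ∀ x y, x ≠ y → ∃ n, 0 < d n x y) :
    IsMetricFun (weightedSup d) := by
  refine ⟨fun x y => by simp only [weightedSup, hcomm _ x y], fun x y => ⟨fun hxy => ?_, ?_⟩,
    fun x y z => ?_⟩
  · by_contra hne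
    obtain ⟨n, hn⟩ := hsep x y hne
    have : 0 < (2⁻¹ : ℝ) ^ n * d n x y := by positivity
    exact (this.trans_le (le_weightedSup h1 n x y)).ne' hxy
  · rintro rfl
    simp [weightedSup, hself]
  · refine Real.iSup_le (fun n => ?_) (add_nonneg (Real.iSup_nonneg (weighted_term_nonneg h0 · x y))
      (Real.iSup_nonneg (weighted_term_nonneg h0 · y z)))
    calc (2⁻¹ : ℝ) ^ n * d n x z ≤ (2⁻¹ : ℝ) ^ n * d n x y + (2⁻¹ : ℝ) ^ n * d n y z := by
          rw [← mul_add]; exact mul_le_mul_of_nonneg_left (htri n x y z) (by positivity)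
      _ ≤ weightedSup d x y + weightedSup d y z :=
          add_le_add (le_weightedSup h1 n x y) (le_weightedSup h1 n y z)

theorem lsc_weightedSup [TopologicalSpace X] (h1 : ∀ n x y, d n x y ≤ 1) (hd : ∀ n, LSC (d n)) : LSC (weightedSup d) :=
  lowerSemicontinuous_ciSup (fun p => bddAbove_range_weighted_term h1 p.1 p.2) fun n =>
    (continuous_const_mul _).comp_lowerSemicontinuous (hd n)
      (monotone_mul_left_of_nonneg (by positivity))

theorem fragments_weightedSup [TopologicalSpace X] (h0 : ∀ n x y, 0 ≤ d n x y)
    (h1 : ∀ n x y, d n x y ≤ 1) (hd : ∀ n, Fragments (d n)) : Fragments (weightedSup d) := by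
  intro L hL ε hε
  obtain ⟨N, hN⟩ := exists_pow_lt_of_lt_one (half_pos hε) (by norm_num : (2⁻¹ : ℝ) < 1)
  obtain ⟨V, hV, hVL, hdiam⟩ := Fragments.exists_forall_le_lt hd N hL (half_pos hε)
  refine ⟨V, hV, hVL, fun x hx y hy => ?_⟩
  have hterm : ∀ n, (2⁻¹ : ℝ) ^ n * d n x y ≤ ε / 2 := by
    intro n
    rcases le_or_gt n N with hn | hn
    · exact (weighted_term_le_self h0 n x y).trans (hdiam x hx y hy n hn).le
    · calc (2⁻¹ : ℝ) ^ n * d n x y ≤ (2⁻¹ : ℝ) ^ N :=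
            (weighted_term_le_pow h1 n x y).trans
              (pow_le_pow_of_le_one (by norm_num) (by norm_num) hn.le)
        _ ≤ ε / 2 := hN.le
  exact (Real.iSup_le hterm (half_pos hε).le).trans_lt (half_lt_self hε)

end WeightedSup

section Cube

variable {Γ : Type*} {A : Set Γ} {x y z : Γ → ℝ}

theorem bddAbove_range_abs_sub (hx : ∀ γ, x γ ∈ Icc (0 : ℝ) 1) (hy : ∀ γ, y γ ∈ Icc (0 : ℝ) 1) :
    BddAbove (range fun γ : A => |x γ - y γ|) :=
  ⟨1, forall_mem_range.2 fun γ => Real.dist_le_of_mem_Icc_01 (hx γ) (hy γ)⟩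

theorem dGamma_nonneg : 0 ≤ dGamma A x y :=
  Real.iSup_nonneg fun _ => abs_nonneg _

theorem dGamma_le_one (hx : ∀ γ, x γ ∈ Icc (0 : ℝ) 1) (hy : ∀ γ, y γ ∈ Icc (0 : ℝ) 1) :
    dGamma A x y ≤ 1 :=
  Real.iSup_le (fun γ => Real.dist_le_of_mem_Icc_01 (hx γ) (hy γ)) zero_le_one

theorem abs_sub_le_dGamma (hx : ∀ γ, x γ ∈ Icc (0 : ℝ) 1) (hy : ∀ γ, y γ ∈ Icc (0 : ℝ) 1)
    {γ : Γ} (hγ : γ ∈ A) : |x γ - y γ| ≤ dGamma A x y :=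
  le_ciSup (bddAbove_range_abs_sub hx hy) (⟨γ, hγ⟩ : A)

theorem dGamma_comm : dGamma A x y = dGamma A y x := by
  simp only [dGamma, abs_sub_comm (x _)]

theorem dGamma_self : dGamma A x x = 0 := by
  simp [dGamma]

theorem dGamma_triangle (hx : ∀ γ, x γ ∈ Icc (0 : ℝ) 1) (hy : ∀ γ, y γ ∈ Icc (0 : ℝ) 1)
    (hz : ∀ γ, z γ ∈ Icc (0 : ℝ) 1) : dGamma A x z ≤ dGamma A x y + dGamma A y z :=
  Real.iSup_le (fun γ => (abs_sub_le _ _ _).trans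
      (add_le_add (abs_sub_le_dGamma hx hy γ.2) (abs_sub_le_dGamma hy hz γ.2)))
    (add_nonneg dGamma_nonneg dGamma_nonneg)

theorem lsc_dGamma_subtype {K : Set (Γ → ℝ)} (hK : ∀ x ∈ K, ∀ γ, x γ ∈ Icc (0 : ℝ) 1)
    (A : Set Γ) : LSC fun x y : K => dGamma A x y :=
  lowerSemicontinuous_ciSup (fun p => bddAbove_range_abs_sub (hK _ p.1.2) (hK _ p.2.2))
    fun γ => Continuous.lowerSemicontinuous <|
      ((continuous_apply γ.1).comp (continuous_subtype_val.comp continuous_fst)).sub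
        ((continuous_apply γ.1).comp (continuous_subtype_val.comp continuous_snd)) |>.abs

end Cube

theorem hFun_le_one {σ : ℕ → ℕ} (hσ : ∀ n, 0 < σ n) (t : ℝ) : hFun σ t ≤ 1 := by
  have hσ1 : ∀ n, (1 : ℝ) ≤ σ n := fun n => by exact_mod_cast hσ n
  unfold hFun
  split_ifs
  exacts [zero_le_one, inv_le_one_of_one_le₀ (hσ1 1), inv_le_one_of_one_le₀ (hσ1 _)]

theorem inv_le_hFun {σ : ℕ → ℕ} (hσ : σ ∈ Pset) {N : ℕ} (hN : 1 ≤ N) {t : ℝ}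
    (ht : (N : ℝ)⁻¹ < t) : ((σ N : ℝ))⁻¹ ≤ hFun σ t := by
  have hσN : ∀ m ≤ N, ((σ N : ℝ))⁻¹ ≤ ((σ m : ℝ))⁻¹ := fun m hm =>
    inv_anti₀ (by exact_mod_cast hσ.2 m) (by exact_mod_cast hσ.1.monotone hm)
  have ht0 : 0 < t := lt_trans (by positivity) ht
  unfold hFun
  rw [if_neg ht0.not_ge]
  split_ifs
  · exact hσN 1 hN
  · refine hσN _ (Nat.floor_le_of_le ?_)
    rw [one_div]
    exact inv_le_of_inv_le₀ (by positivity) ht.le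

theorem fragmentsOn_dGamma_of_le {Γ : Type*} {K : Set (Γ → ℝ)} {σ : Γ → ℕ → ℕ}
    (hσP : ∀ γ, σ γ ∈ Pset) (hfrag : FragmentsOn (fun x y => ⨆ γ, hFun (σ γ) |x γ - y γ|) K)
    {A : Set Γ} {τ : ℕ → ℕ} (hτ : ∀ γ ∈ A, σ γ ≤ τ) : FragmentsOn (dGamma A) K := by
  refine hfrag.of_forall_lt fun ε hε => ?_
  obtain ⟨n, hn⟩ := exists_nat_one_div_lt hε
  set N := n + 1
  have hN : (N : ℝ)⁻¹ < ε := by simpa [N, one_div] using hn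
  refine ⟨((τ N : ℝ) + 1)⁻¹, by positivity, fun x _ y _ hxy => ?_⟩
  have hcoord : ∀ γ ∈ A, |x γ - y γ| ≤ (N : ℝ)⁻¹ := by
    intro γ hγ
    by_contra! hlt
    have hbdd : BddAbove (range fun γ => hFun (σ γ) |x γ - y γ|) :=
      ⟨1, forall_mem_range.2 fun γ => hFun_le_one (hσP γ).2 _⟩
    have hτσ : ((τ N : ℝ) + 1)⁻¹ ≤ ((σ γ N : ℝ))⁻¹ :=
      inv_anti₀ (by exact_mod_cast (hσP γ).2 N) (by exact_mod_cast (hτ γ hγ N).trans (τ N).le_succ)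
    exact hxy.not_ge <| hτσ.trans <| (inv_le_hFun (hσP γ) n.succ_pos hlt).trans (le_ciSup hbdd γ)
  exact (Real.iSup_le (fun γ : A => hcoord γ γ.2) (by positivity)).trans_lt hN

theorem statement5_general {Γ : Type*} (K : Set (Γ → ℝ))
    (hcube : ∀ x ∈ K, ∀ γ, x γ ∈ Set.Icc (0 : ℝ) 1)
    (σ : Γ → (ℕ → ℕ)) (hσP : ∀ γ, σ γ ∈ Pset)
    (hfrag : FragmentsOn (fun x y => ⨆ γ, hFun (σ γ) |x γ - y γ|) K)
    (hσb : SigmaBounded (σ '' Set.univ)) :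
    (∃ d : K → K → ℝ, IsMetricFun d ∧ LSC d ∧ Fragments d) ∧
      ∃ Γn : ℕ → Set Γ, (⋃ n, Γn n) = Set.univ ∧
        ∀ n, FragmentsOn (dGamma (Γn n)) K := by
  obtain ⟨B, hσB, hBbdd⟩ := hσb
  choose τ hτ using hBbdd
  set Γn : ℕ → Set Γ := fun n => σ ⁻¹' B n
  have hcover : ∀ γ, ∃ n, γ ∈ Γn n := fun γ =>
    mem_iUnion (s := B).1 (hσB (mem_image_of_mem σ (mem_univ γ)))
  have hfragn : ∀ n, FragmentsOn (dGamma (Γn n)) K := fun n =>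
    fragmentsOn_dGamma_of_le hσP hfrag fun γ hγ => hτ n (σ γ) hγ
  set d : ℕ → K → K → ℝ := fun n x y => dGamma (Γn n) x y
  have hx : ∀ x : K, ∀ γ, (x : Γ → ℝ) γ ∈ Icc (0 : ℝ) 1 := fun x => hcube x x.2
  have h0 : ∀ n x y, 0 ≤ d n x y := fun _ _ _ => dGamma_nonneg
  have h1 : ∀ n x y, d n x y ≤ 1 := fun _ x y => dGamma_le_one (hx x) (hx y)
  have hsep : ∀ x y : K, x ≠ y → ∃ n, 0 < d n x y := by
    intro x y hxy
    obtain ⟨γ, hγ⟩ := Function.ne_iff.1 (Subtype.coe_ne_coe.2 hxy)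
    obtain ⟨n, hn⟩ := hcover γ
    exact ⟨n, (abs_pos.2 (sub_ne_zero.2 hγ)).trans_le (abs_sub_le_dGamma (hx x) (hx y) hn)⟩
  refine ⟨⟨weightedSup d, ?_, lsc_weightedSup h1 fun n => lsc_dGamma_subtype hcube (Γn n),
    fragments_weightedSup h0 h1 fun n => (hfragn n).fragments_subtype⟩,
    Γn, iUnion_eq_univ_iff.2 hcover, hfragn⟩
  exact isMetricFun_weightedSup h0 h1 (fun _ _ _ => dGamma_comm) (fun _ _ => dGamma_self)
    (fun _ x y z => dGamma_triangle (hx x) (hx y) (hx z)) hsep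

/-- If `K ⊆ [0,1]^Γ` is compact, `σ : Γ → P` is such that
`f(x,y) = sup_γ h^{σ(γ)}(|x_γ - y_γ|)` fragments `K`, and `σ(Γ)` is σ-bounded, then `K` is
Radon-Nikodým compact, and moreover `Γ = ⋃_n Γ_n` with each `d_{Γ_n}` fragmenting `K`. -/
theorem statement5 {Γ : Type*} (K : Set (Γ → ℝ))
    (hcube : ∀ x ∈ K, ∀ γ, x γ ∈ Set.Icc (0 : ℝ) 1) (hcomp : IsCompact K)
    (σ : Γ → (ℕ → ℕ)) (hσP : ∀ γ, σ γ ∈ Pset)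
    (hfrag : FragmentsOn (fun x y => ⨆ γ, hFun (σ γ) |x γ - y γ|) K)
    (hσb : SigmaBounded (σ '' Set.univ)) :
    (∃ d : K → K → ℝ, IsMetricFun d ∧ LSC d ∧ Fragments d) ∧
      ∃ Γn : ℕ → Set Γ, (⋃ n, Γn n) = Set.univ ∧
        ∀ n, FragmentsOn (dGamma (Γn n)) K :=
  statement5_general K hcube σ hσP hfrag hσb
end

section
/- Let V be a real Banach space whose density character is less than 𝔟, and suppose there exists a lower semicontinuous quasi metric on the dual unit ball B_{V*} equipped with the weak* topology which fragments it. Then V is Asplund generated: there exists a bounded set M ⊆ V whose closed linear span is V and such that the pseudometric d_M(x*,y*) = sup_{x∈M} |x*(x) − y*(x)| fragments (B_{V*}, weak*). -/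
open Set Topology Cardinal

/-- The density character of a topological space: the least cardinality of a dense subset. -/
noncomputable def densChar (V : Type u) [TopologicalSpace V] : Cardinal.{u} :=
  sInf { c | ∃ s : Set V, Dense s ∧ #s = c }

/-- The closed unit ball of the dual of `V`, carrying the weak* topology. -/
def dualBall (V : Type u) [NormedAddCommGroup V] [NormedSpace ℝ V] : Set (WeakDual ℝ V) :=
  {φ : WeakDual ℝ V | ∀ x : V, |φ x| ≤ ‖x‖}

/-- The pseudometric `d_M` on the dual unit ball induced by a set `M ⊆ V`:
`d_M(x*, y*) = sup_{x ∈ M} |x*(x) - y*(x)|`. -/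
noncomputable def dM {V : Type u} [NormedAddCommGroup V] [NormedSpace ℝ V] (M : Set V)
    (φ ψ : dualBall V) : ℝ :=
  ⨆ x : M, |(φ : WeakDual ℝ V) x - (ψ : WeakDual ℝ V) x|

/-- `V` is Asplund generated: it is the closed linear span of a bounded set `M` such that
`d_M` fragments the weak* dual unit ball. -/
def AsplundGenerated (V : Type u) [NormedAddCommGroup V] [NormedSpace ℝ V] : Prop :=
  ∃ M : Set V, Bornology.IsBounded M ∧
    (Submodule.span ℝ M).topologicalClosure = ⊤ ∧
    Fragments (dM M)

/-!
Fix a weak*-lower semicontinuous quasi metric `f` fragmenting the dual ball `K`. By compactness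
of `K`, each evaluation `φ ↦ φ x` is uniformly continuous from `f` to `ℝ`: there is a modulus
`σ_x : ℕ → ℕ` with `f(φ, ψ) < 1/(σ_x(n)+1) ⟹ |φ x - ψ x| ≤ 1/(n+1)`. Take a dense set `D ⊆ V`
with `|D|` the density character. Since `|D| < 𝔟`, the moduli `σ_x`, `x ∈ D`, split into countably
many classes `k(x) = j` with a common bound `τ_j`. Rescale each `x ∈ D` by
`1/((k(x)+1)(1+‖x‖))` to get a bounded set `M` whose span is still dense. For `d_M`, the points
with `k(x) ≤ n` are controlled by the finitely many moduli `τ_0, …, τ_n`, and the others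
contribute at most `2/(n+1)` because of the rescaling; so `d_M` is uniformly small on
`f`-small sets and inherits fragmentability from `f`.
-/

theorem Fragments.of_forall_exists_lt_imp_lt {X : Type*} [TopologicalSpace X]
    {f g : X → X → ℝ} (hf : Fragments f)
    (h : ∀ ε > 0, ∃ δ > 0, ∀ x y, f x y < δ → g x y < ε) : Fragments g := by
  intro L hL ε hε
  obtain ⟨δ, hδ, hfg⟩ := h ε hε
  obtain ⟨U, hU, hUL, hsmall⟩ := hf L hL δ hδ
  exact ⟨U, hU, hUL, fun x hx y hy => hfg x y (hsmall x hx y hy)⟩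

theorem IsQuasiMetric.pos_of_ne {X : Type*} {f : X → X → ℝ} (hf : IsQuasiMetric f) {x y : X}
    (hxy : x ≠ y) : 0 < f x y :=
  (hf.1 x y).lt_of_ne fun h => hxy ((hf.2.2 x y).1 h.symm)

theorem LSC.exists_pos_forall_lt_imp_abs_sub_lt {X : Type*} [TopologicalSpace X]
    [CompactSpace X] {f : X → X → ℝ} (hf : LSC f) (hpos : ∀ x y, x ≠ y → 0 < f x y)
    {g : X → ℝ} (hg : Continuous g) {η : ℝ} (hη : 0 < η) :
    ∃ δ > 0, ∀ x y, f x y < δ → |g x - g y| < η := by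
  set K : Set (X × X) := {p | η ≤ |g p.1 - g p.2|}
  have hK : IsCompact K :=
    (isClosed_le continuous_const (hg.comp continuous_fst |>.sub (hg.comp continuous_snd)).abs)
      |>.isCompact
  rcases K.eq_empty_or_nonempty with hKe | hKne
  · refine ⟨1, one_pos, fun x y _ => not_le.1 fun hxy => ?_⟩
    exact (Set.eq_empty_iff_forall_notMem.1 hKe) (x, y) hxy
  obtain ⟨p, hpK, hmin⟩ := (hf.lowerSemicontinuousOn K).exists_isMinOn hKne hK
  have hp : p.1 ≠ p.2 := fun h => by
    simp only [K, Set.mem_ofPred_eq, h, sub_self, abs_zero] at hpK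
    linarith
  refine ⟨f p.1 p.2, hpos _ _ hp, fun x y hxy => not_le.1 fun hK' => ?_⟩
  exact (hmin (a := (x, y)) hK').not_gt hxy

theorem LSC.exists_moduli {ι X : Type*} [TopologicalSpace X] [CompactSpace X] {f : X → X → ℝ}
    (hf : LSC f) (hpos : ∀ x y, x ≠ y → 0 < f x y) {g : ι → X → ℝ} (hg : ∀ i, Continuous (g i)) :
    ∃ σ : ι → ℕ → ℕ, ∀ i n x y, f x y < ((σ i n : ℝ) + 1)⁻¹ →
      |g i x - g i y| ≤ ((n : ℝ) + 1)⁻¹ := by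
  have h : ∀ i (n : ℕ), ∃ m : ℕ, ∀ x y, f x y < ((m : ℝ) + 1)⁻¹ →
      |g i x - g i y| ≤ ((n : ℝ) + 1)⁻¹ := fun i n => by
    obtain ⟨δ, hδ, hfg⟩ := hf.exists_pos_forall_lt_imp_abs_sub_lt hpos (hg i)
      (inv_pos.2 n.cast_add_one_pos)
    obtain ⟨m, hm⟩ := exists_nat_one_div_lt hδ
    rw [one_div] at hm
    exact ⟨m, fun x y hxy => (hfg x y (hxy.trans hm)).le⟩
  choose σ hσ using h
  exact ⟨σ, hσ⟩

theorem exists_dense_mk_eq_densChar (V : Type u) [TopologicalSpace V] :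
    ∃ s : Set V, Dense s ∧ #s = densChar V :=
  csInf_mem (s := {c | ∃ s : Set V, Dense s ∧ #s = c}) ⟨_, Set.univ, dense_univ, rfl⟩

theorem SigmaBounded.of_mk_lt {S : Set (ℕ → ℕ)} (hS : #S < cardinalB) : SigmaBounded S := by
  by_contra h
  exact (csInf_le' ⟨S, h, rfl⟩ : cardinalB ≤ #S).not_gt hS

theorem exists_le_of_mk_lt_cardinalB {ι : Type u} (σ : ι → ℕ → ℕ)
    (hι : #ι < Cardinal.lift.{u} cardinalB) :
    ∃ (k : ι → ℕ) (τ : ℕ → ℕ → ℕ), ∀ i, σ i ≤ τ (k i) := by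
  have hrange : #(Set.range σ) < cardinalB := by
    rw [← Cardinal.lift_lt.{0, u}]
    exact Cardinal.mk_range_le_lift.trans_lt (by rwa [Cardinal.lift_id'])
  obtain ⟨B, hcover, hbdd⟩ := SigmaBounded.of_mk_lt hrange
  choose τ hτ using hbdd
  choose k hk using fun i => Set.mem_iUnion.1 (hcover (Set.mem_range_self i))
  exact ⟨k, τ, fun i => hτ _ _ (hk i)⟩

theorem Submodule.topologicalClosure_span_range_smul_eq_top {𝕜 E ι : Type*} [Field 𝕜]
    [AddCommGroup E] [Module 𝕜 E] [TopologicalSpace E] [ContinuousAdd E]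
    [ContinuousConstSMul 𝕜 E] {v : ι → E} (hv : DenseRange v) {c : ι → 𝕜}
    (hc : ∀ i, c i ≠ 0) :
    (Submodule.span 𝕜 (Set.range fun i => c i • v i)).topologicalClosure = ⊤ := by
  refine Submodule.dense_iff_topologicalClosure_eq_top.1 (hv.mono ?_)
  rintro _ ⟨i, rfl⟩
  have hi : c i • v i ∈ Submodule.span 𝕜 (Set.range fun i => c i • v i) :=
    Submodule.subset_span (Set.mem_range_self i)
  simpa [smul_smul, hc i] using Submodule.smul_mem _ (c i)⁻¹ hi

section DualBall

variable {V : Type u} [NormedAddCommGroup V] [NormedSpace ℝ V]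

theorem dualBall_eq_preimage_closedBall :
    dualBall V = WeakDual.toStrongDual ⁻¹' Metric.closedBall 0 1 := by
  ext φ
  simp only [dualBall, Set.mem_ofPred_eq, Set.mem_preimage, mem_closedBall_zero_iff,
    ContinuousLinearMap.opNorm_le_iff zero_le_one, one_mul, Real.norm_eq_abs]
  rfl

theorem isCompact_dualBall : IsCompact (dualBall V) := by
  rw [dualBall_eq_preimage_closedBall]
  exact WeakDual.isCompact_closedBall 0 1

theorem abs_sub_le_two_mul_norm_of_mem_dualBall (φ ψ : dualBall V) (x : V) :
    |(φ : WeakDual ℝ V) x - (ψ : WeakDual ℝ V) x| ≤ 2 * ‖x‖ := by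
  linarith [abs_sub ((φ : WeakDual ℝ V) x) ((ψ : WeakDual ℝ V) x), φ.2 x, ψ.2 x]

theorem dM_le {M : Set V} {φ ψ : dualBall V} {r : ℝ} (hr : 0 ≤ r)
    (h : ∀ x ∈ M, |(φ : WeakDual ℝ V) x - (ψ : WeakDual ℝ V) x| ≤ r) : dM M φ ψ ≤ r :=
  Real.iSup_le (fun x => h x x.2) hr

end DualBall

section AsplundGenerated

variable {V : Type u} [NormedAddCommGroup V]

/-- The factor by which a point of class `k` is shrunk in the generating set. -/
noncomputable def weight (k : ℕ) (x : V) : ℝ := (((k : ℝ) + 1) * (1 + ‖x‖))⁻¹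

theorem weight_pos (k : ℕ) (x : V) : 0 < weight k x := by
  unfold weight
  positivity

theorem weight_le_one (k : ℕ) (x : V) : weight k x ≤ 1 :=
  inv_le_one_of_one_le₀ (one_le_mul_of_one_le_of_one_le (by simp) (by simp))

theorem weight_mul_norm_le (k : ℕ) (x : V) : weight k x * ‖x‖ ≤ ((k : ℝ) + 1)⁻¹ := by
  rw [weight, mul_inv, mul_assoc]
  refine mul_le_of_le_one_right (by positivity) ?_
  rw [inv_mul_le_iff₀ (by positivity)]
  linarith [norm_nonneg x]

variable [NormedSpace ℝ V]

/-- For `n < k` the shrinking alone gives the bound: `weight k x * 2‖x‖ ≤ 2/(k+1)`. -/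
theorem weight_mul_abs_sub_le (φ ψ : dualBall V) {x : V} {k n : ℕ}
    (hclose : k ≤ n → |(φ : WeakDual ℝ V) x - (ψ : WeakDual ℝ V) x| ≤ ((n : ℝ) + 1)⁻¹) :
    weight k x * |(φ : WeakDual ℝ V) x - (ψ : WeakDual ℝ V) x| ≤ 2 * ((n : ℝ) + 1)⁻¹ := by
  have hn : (0 : ℝ) < ((n : ℝ) + 1)⁻¹ := inv_pos.2 n.cast_add_one_pos
  rcases le_or_gt k n with hkn | hnk
  · calc weight k x * |(φ : WeakDual ℝ V) x - (ψ : WeakDual ℝ V) x|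
        ≤ 1 * ((n : ℝ) + 1)⁻¹ :=
          mul_le_mul (weight_le_one k x) (hclose hkn) (abs_nonneg _) zero_le_one
      _ ≤ 2 * ((n : ℝ) + 1)⁻¹ := by linarith
  · calc weight k x * |(φ : WeakDual ℝ V) x - (ψ : WeakDual ℝ V) x|
        ≤ weight k x * (2 * ‖x‖) :=
          mul_le_mul_of_nonneg_left (abs_sub_le_two_mul_norm_of_mem_dualBall φ ψ x)
            (weight_pos k x).le
      _ = 2 * (weight k x * ‖x‖) := by ring
      _ ≤ 2 * ((k : ℝ) + 1)⁻¹ :=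
          mul_le_mul_of_nonneg_left (weight_mul_norm_le k x) zero_le_two
      _ ≤ 2 * ((n : ℝ) + 1)⁻¹ := by gcongr

theorem asplundGenerated_of_denseRange {ι : Type*} {v : ι → V} (hv : DenseRange v)
    {f : dualBall V → dualBall V → ℝ} (hf : Fragments f) {σ : ι → ℕ → ℕ}
    (hσ : ∀ i n φ ψ, f φ ψ < ((σ i n : ℝ) + 1)⁻¹ →
      |(φ : WeakDual ℝ V) (v i) - (ψ : WeakDual ℝ V) (v i)| ≤ ((n : ℝ) + 1)⁻¹)
    {k : ι → ℕ} {τ : ℕ → ℕ → ℕ} (hτ : ∀ i, σ i ≤ τ (k i)) : AsplundGenerated V := by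
  refine ⟨Set.range fun i => weight (k i) (v i) • v i, ?_,
    Submodule.topologicalClosure_span_range_smul_eq_top hv fun i => (weight_pos _ _).ne', ?_⟩
  · refine (Metric.isBounded_closedBall (x := (0 : V)) (r := 1)).subset ?_
    rintro _ ⟨i, rfl⟩
    rw [mem_closedBall_zero_iff, norm_smul, Real.norm_of_nonneg (weight_pos _ _).le]
    exact (weight_mul_norm_le _ _).trans (inv_le_one_of_one_le₀ (by simp))
  refine hf.of_forall_exists_lt_imp_lt fun ε hε => ?_
  obtain ⟨n, hn⟩ := exists_nat_one_div_lt (half_pos hε)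
  rw [one_div] at hn
  -- only the classes `k i ≤ n` need the modulus, and there are finitely many of them
  set N := (Finset.range (n + 1)).sup fun j => τ j n
  refine ⟨((N : ℝ) + 1)⁻¹, inv_pos.2 N.cast_add_one_pos, fun φ ψ hφψ => ?_⟩
  refine (dM_le (r := 2 * ((n : ℝ) + 1)⁻¹) (by positivity) ?_).trans_lt (by linarith)
  rintro _ ⟨i, rfl⟩
  simp only [map_smul, smul_eq_mul, ← mul_sub, abs_mul, abs_of_pos (weight_pos _ _)]
  refine weight_mul_abs_sub_le φ ψ fun hkn => hσ i n φ ψ (hφψ.trans_le ?_)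
  have hσN : σ i n ≤ N := (hτ i n).trans
    (Finset.le_sup (f := fun j => τ j n) (Finset.mem_range_succ_iff.2 hkn))
  gcongr

end AsplundGenerated

theorem statement8_general {V : Type u} [NormedAddCommGroup V] [NormedSpace ℝ V]
    (hdens : densChar V < Cardinal.lift.{u} cardinalB)
    (hqRN : ∃ f : dualBall V → dualBall V → ℝ, IsQuasiMetric f ∧ LSC f ∧ Fragments f) :
    AsplundGenerated V := by
  obtain ⟨f, hquasi, hlsc, hfrag⟩ := hqRN
  have : CompactSpace (dualBall V) := isCompact_iff_compactSpace.1 isCompact_dualBall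
  obtain ⟨s, hs, hcard⟩ := exists_dense_mk_eq_densChar V
  obtain ⟨σ, hσ⟩ := hlsc.exists_moduli (ι := s) (fun _ _ => hquasi.pos_of_ne)
    (g := fun x φ => (φ : WeakDual ℝ V) x) fun x =>
      (WeakDual.eval_continuous (x : V)).comp continuous_subtype_val
  obtain ⟨k, τ, hτ⟩ := exists_le_of_mk_lt_cardinalB σ (hcard ▸ hdens)
  exact asplundGenerated_of_denseRange hs.denseRange_val hfrag hσ hτ

/-- If `V` is a Banach space of density character less than `𝔟` whose weak* dual unit ball is
quasi Radon-Nikodým compact, then `V` is Asplund generated. -/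
theorem statement8 {V : Type u} [NormedAddCommGroup V] [NormedSpace ℝ V] [CompleteSpace V]
    (hdens : densChar V < Cardinal.lift.{u} cardinalB)
    (hqRN : ∃ f : dualBall V → dualBall V → ℝ, IsQuasiMetric f ∧ LSC f ∧ Fragments f) :
    AsplundGenerated V :=
  statement8_general hdens hqRN
end

section
/- If X is a 𝒦-analytic topological space which contains a dense subset of cardinality less than 𝔟, then X contains a dense σ-compact subset (a dense subset which is a countable union of compact sets). -/
open Set Topology Cardinal

/-- A topological space is `𝒦`-analytic if it admits an usco `φ : ℕ^ℕ → 2^X` with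
compact values whose union is all of `X`. -/
def KAnalytic (X : Type*) [TopologicalSpace X] : Prop :=
  ∃ φ : (ℕ → ℕ) → Set X,
    (∀ σ, IsCompact (φ σ)) ∧
    (∀ U : Set X, IsOpen U → IsOpen {σ : ℕ → ℕ | φ σ ⊆ U}) ∧
    (⋃ σ, φ σ) = Set.univ

lemma usco_biUnion_isCompact {X : Type*} [TopologicalSpace X]
    (φ : (ℕ → ℕ) → Set X) (hφc : ∀ σ, IsCompact (φ σ))
    (hφu : ∀ U : Set X, IsOpen U → IsOpen {σ : ℕ → ℕ | φ σ ⊆ U})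
    {C : Set (ℕ → ℕ)} (hC : IsCompact C) :
    IsCompact (⋃ σ ∈ C, φ σ) := by
  classical
  apply isCompact_of_finite_subcover
  intro ι U hU hcov
  have hsub : ∀ σ ∈ C, ∃ t : Finset ι, φ σ ⊆ ⋃ i ∈ t, U i := fun σ hσ =>
    (hφc σ).elim_finite_subcover U hU (fun x hx => hcov (Set.mem_biUnion hσ hx))
  choose! t ht using hsub
  obtain ⟨s, hs⟩ := hC.elim_finite_subcover
      (fun σ => {σ' : ℕ → ℕ | φ σ' ⊆ ⋃ i ∈ t σ, U i})
      (fun σ => hφu _ (isOpen_biUnion fun i _ => hU i))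
      (fun σ hσ => Set.mem_iUnion.2 ⟨σ, ht σ hσ⟩)
  refine ⟨s.biUnion t, ?_⟩
  intro x hx
  obtain ⟨σ, hσC, hxσ⟩ := Set.mem_iUnion₂.1 hx
  obtain ⟨σ', hσ's, hσ'⟩ := Set.mem_iUnion₂.1 (hs hσC)
  obtain ⟨i, hit, hxi⟩ := Set.mem_iUnion₂.1 (hσ' hxσ)
  exact Set.mem_iUnion₂.2 ⟨i, Finset.mem_biUnion.2 ⟨σ', hσ's, hit⟩, hxi⟩

lemma isCompact_le_tau (τ : ℕ → ℕ) : IsCompact {σ : ℕ → ℕ | σ ≤ τ} := by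
  have : {σ : ℕ → ℕ | σ ≤ τ} = Set.pi Set.univ (fun i => Set.Iic (τ i)) := by
    ext σ; simp [Pi.le_def, Set.mem_pi]
  rw [this]
  exact isCompact_univ_pi fun i => (Set.finite_Iic (τ i)).isCompact

/-- A `𝒦`-analytic topological space with a dense subset of cardinality less than `𝔟`
contains a dense σ-compact subset. -/
theorem statement12 {X : Type u} [TopologicalSpace X] (hKA : KAnalytic X)
    (hdense : ∃ D : Set X, Dense D ∧ #D < Cardinal.lift.{u} cardinalB) :
    ∃ Kn : ℕ → Set X, (∀ n, IsCompact (Kn n)) ∧ Dense (⋃ n, Kn n) := by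
  obtain ⟨φ, hφc, hφu, hφU⟩ := hKA
  obtain ⟨D, hD, hDcard⟩ := hdense
  have hsel : ∀ x : X, ∃ σ, x ∈ φ σ := by
    intro x
    have : x ∈ ⋃ σ, φ σ := by rw [hφU]; trivial
    simpa using this
  choose f hf using hsel
  set S : Set (ℕ → ℕ) := f '' D with hSdef
  have hScard : #S < cardinalB := by
    have h1 : Cardinal.lift.{u} #S ≤ Cardinal.lift.{0} #D := Cardinal.mk_image_le_lift
    rw [Cardinal.lift_id'] at h1
    have h2 : Cardinal.lift.{u} #S < Cardinal.lift.{u} cardinalB := lt_of_le_of_lt h1 hDcard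
    exact Cardinal.lift_lt.1 h2
  have hSb : SigmaBounded S := by
    by_contra h
    exact absurd hScard (not_lt.2 (csInf_le' ⟨S, h, rfl⟩))
  obtain ⟨B, hSB, hBb⟩ := hSb
  choose τ hτ using hBb
  refine ⟨fun n => ⋃ σ ∈ {σ : ℕ → ℕ | σ ≤ τ n}, φ σ, ?_, ?_⟩
  · exact fun n => usco_biUnion_isCompact φ hφc hφu (isCompact_le_tau (τ n))
  · apply hD.mono
    intro d hd
    have hfd : f d ∈ ⋃ n, B n := hSB ⟨d, hd, rfl⟩
    obtain ⟨n, hn⟩ := Set.mem_iUnion.1 hfd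
    exact Set.mem_iUnion.2 ⟨n, Set.mem_biUnion (hτ n _ hn) (hf d)⟩
end
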